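/- Let L > 0, let γ, T, N : ℝ → ℝ² be smooth L-periodic maps and κ : ℝ → ℝ a smooth L-periodic function with κ(σ) > 0 for all σ, satisfying γ'(σ) = T(σ), N'(σ) = −κ(σ)·T(σ), and T(σ) ∧ N(σ) = 1 for all σ. Let e := γ + κ⁻¹·N be the Minkowski evolute. Assume in addition the anisotropic isoperimetric inequality L² ≥ 2 𝒜(γ) ∫₀ᴸ κ(σ) dσ. Then 𝒜(e) ≤ 0 and L² − 2 𝒜(γ) ∫₀ᴸ κ dσ ≤ 2 (∫₀ᴸ κ dσ) |𝒜(e)|. -/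

import Mathlib

/-- The wedge product `(a,b) ∧ (c,d) = ad − bc` of two plane vectors. -/
def wedge (v w : ℝ × ℝ) : ℝ := v.1 * w.2 - v.2 * w.1

/-- The signed Euclidean area `𝒜(c) = (1/2)∫₀ᴸ c ∧ c' dσ` of an `L`-periodic plane curve. -/
noncomputable def signedArea (L : ℝ) (c : ℝ → ℝ × ℝ) : ℝ :=
  (1 / 2) * ∫ σ in (0:ℝ)..L, wedge (c σ) (deriv c σ)

private lemma hasDerivAt_fst' {f : ℝ → ℝ × ℝ} {v : ℝ × ℝ} {x : ℝ}
    (h : HasDerivAt f v x) : HasDerivAt (fun t => (f t).1) v.1 x := by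
  exact (hasFDerivAt_fst.comp x h.hasFDerivAt).hasDerivAt.congr_deriv (by simp)

private lemma hasDerivAt_snd' {f : ℝ → ℝ × ℝ} {v : ℝ × ℝ} {x : ℝ}
    (h : HasDerivAt f v x) : HasDerivAt (fun t => (f t).2) v.2 x := by
  exact (hasFDerivAt_snd.comp x h.hasFDerivAt).hasDerivAt.congr_deriv (by simp)

theorem anisotropic_reverse_isoperimetric (L : ℝ) (hL : 0 < L)
    (γ T N : ℝ → ℝ × ℝ) (κ : ℝ → ℝ)
    (hγ : ContDiff ℝ (⊤ : ℕ∞) γ) (hT : ContDiff ℝ (⊤ : ℕ∞) T) (hN : ContDiff ℝ (⊤ : ℕ∞) N)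
    (hκ : ContDiff ℝ (⊤ : ℕ∞) κ)
    (hγp : Function.Periodic γ L) (hTp : Function.Periodic T L)
    (hNp : Function.Periodic N L) (hκp : Function.Periodic κ L)
    (hκpos : ∀ σ, 0 < κ σ)
    (hγ' : ∀ σ, deriv γ σ = T σ)
    (hN' : ∀ σ, deriv N σ = -(κ σ) • T σ)
    (hTN : ∀ σ, wedge (T σ) (N σ) = 1)
    (hiso : L ^ 2 ≥ 2 * signedArea L γ * ∫ σ in (0:ℝ)..L, κ σ) :
    signedArea L (fun σ => γ σ + (κ σ)⁻¹ • N σ) ≤ 0 ∧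
    L ^ 2 - 2 * signedArea L γ * (∫ σ in (0:ℝ)..L, κ σ)
      ≤ 2 * (∫ σ in (0:ℝ)..L, κ σ) *
          |signedArea L (fun σ => γ σ + (κ σ)⁻¹ • N σ)| := by
  have hκne : ∀ σ, κ σ ≠ 0 := fun σ => (hκpos σ).ne'
  have hκc : Continuous κ := hκ.continuous
  set f : ℝ → ℝ := fun σ => (κ σ)⁻¹ with hf
  have hfC : ContDiff ℝ (⊤ : ℕ∞) f := hκ.inv hκne
  have hfc : Continuous f := hfC.continuous
  have hf'c : Continuous (deriv f) := hfC.continuous_deriv (by simp)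
  set g : ℝ → ℝ := fun σ => wedge (γ σ) (N σ) with hg
  have hγd : ∀ σ, HasDerivAt γ (T σ) σ := fun σ =>
    hγ' σ ▸ (hγ.differentiable (by simp) σ).hasDerivAt
  have hNd : ∀ σ, HasDerivAt N (-(κ σ) • T σ) σ := fun σ =>
    hN' σ ▸ (hN.differentiable (by simp) σ).hasDerivAt
  have hfd : ∀ σ, HasDerivAt f (deriv f σ) σ :=
    fun σ => (hfC.differentiable (by simp) σ).hasDerivAt
  -- derivative of g
  have hgd : ∀ σ, HasDerivAt g (1 - κ σ * wedge (γ σ) (T σ)) σ := by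
    intro σ
    have h1 := ((hasDerivAt_fst' (hγd σ)).mul (hasDerivAt_snd' (hNd σ))).sub
      ((hasDerivAt_snd' (hγd σ)).mul (hasDerivAt_fst' (hNd σ)))
    have key : (T σ).1 * (N σ).2 - (T σ).2 * (N σ).1 = 1 := hTN σ
    refine h1.congr_deriv (Eq.symm ?_)
    simp only [wedge, Prod.fst_neg, Prod.snd_neg, Prod.smul_fst, Prod.smul_snd,
      smul_eq_mul, neg_mul, mul_neg]
    linear_combination -key
  -- the evolute and its derivative
  set e : ℝ → ℝ × ℝ := fun σ => γ σ + f σ • N σ with he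
  have hee : (fun σ => γ σ + (κ σ)⁻¹ • N σ) = e := rfl
  have hed : ∀ σ, HasDerivAt e (deriv f σ • N σ) σ := by
    intro σ
    have h1 := (hγd σ).add ((hfd σ).smul (hNd σ))
    refine h1.congr_deriv (Eq.symm ?_)
    have hz : T σ + f σ • (-(κ σ) • T σ) = 0 := by
      rw [smul_smul]
      have hv : f σ * -κ σ = -1 := by
        show (κ σ)⁻¹ * -κ σ = -1
        rw [mul_neg, inv_mul_cancel₀ (hκne σ)]
      rw [hv]; simp
    rw [← add_assoc, hz, zero_add]
  have hwedge : ∀ σ, wedge (e σ) (deriv e σ) = deriv f σ * g σ := by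
    intro σ
    rw [(hed σ).deriv]
    simp only [he, hg, wedge, Prod.fst_add, Prod.snd_add, Prod.smul_fst, Prod.smul_snd,
      smul_eq_mul]
    ring
  have hgc : Continuous g :=
    (hγ.continuous.fst.mul hN.continuous.snd).sub (hγ.continuous.snd.mul hN.continuous.fst)
  have hwγT : Continuous (fun σ => wedge (γ σ) (T σ)) :=
    (hγ.continuous.fst.mul hT.continuous.snd).sub (hγ.continuous.snd.mul hT.continuous.fst)
  have hg'c : Continuous (fun σ => 1 - κ σ * wedge (γ σ) (T σ)) :=
    continuous_const.sub (hκc.mul hwγT)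
  -- integration by parts : ∫ f' g = - ∫ f g'
  have hib : (∫ σ in (0:ℝ)..L, deriv f σ * g σ)
      = -∫ σ in (0:ℝ)..L, f σ * (1 - κ σ * wedge (γ σ) (T σ)) := by
    have h := intervalIntegral.integral_deriv_mul_eq_sub_of_hasDerivAt
      (u := f) (v := g) (u' := deriv f) (v' := fun σ => 1 - κ σ * wedge (γ σ) (T σ))
      (a := 0) (b := L)
      hfc.continuousOn hgc.continuousOn
      (fun x _ => hfd x) (fun x _ => hgd x)
      (hf'c.intervalIntegrable 0 L) (hg'c.intervalIntegrable 0 L)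
    have hsplit : (∫ σ in (0:ℝ)..L, (deriv f σ * g σ + f σ * (1 - κ σ * wedge (γ σ) (T σ))))
        = (∫ σ in (0:ℝ)..L, deriv f σ * g σ)
          + ∫ σ in (0:ℝ)..L, f σ * (1 - κ σ * wedge (γ σ) (T σ)) :=
      intervalIntegral.integral_add ((hf'c.mul hgc).intervalIntegrable 0 L)
        ((hfc.mul hg'c).intervalIntegrable 0 L)
    have h1 : κ L = κ 0 := by simpa using hκp 0
    have h2 : γ L = γ 0 := by simpa using hγp 0
    have h3 : N L = N 0 := by simpa using hNp 0
    have hper : f L * g L - f 0 * g 0 = 0 := by simp [hf, hg, h1, h2, h3]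
    rw [hsplit, hper] at h
    linarith
  have hK : ∀ σ, f σ * (1 - κ σ * wedge (γ σ) (T σ)) = f σ - wedge (γ σ) (T σ) := by
    intro σ
    have : f σ * κ σ = 1 := inv_mul_cancel₀ (hκne σ)
    calc f σ * (1 - κ σ * wedge (γ σ) (T σ))
        = f σ - (f σ * κ σ) * wedge (γ σ) (T σ) := by ring
      _ = f σ - wedge (γ σ) (T σ) := by rw [this]; ring
  set K : ℝ := ∫ σ in (0:ℝ)..L, κ σ with hKdef
  set J : ℝ := ∫ σ in (0:ℝ)..L, f σ with hJdef
  have hArea : signedArea L e = signedArea L γ - (1/2) * J := by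
    have e1 : (∫ σ in (0:ℝ)..L, wedge (e σ) (deriv e σ))
        = ∫ σ in (0:ℝ)..L, deriv f σ * g σ :=
      intervalIntegral.integral_congr (fun σ _ => hwedge σ)
    have e2 : (∫ σ in (0:ℝ)..L, f σ * (1 - κ σ * wedge (γ σ) (T σ)))
        = J - ∫ σ in (0:ℝ)..L, wedge (γ σ) (T σ) := by
      rw [← intervalIntegral.integral_sub (hfc.intervalIntegrable 0 L)
        (hwγT.intervalIntegrable 0 L)]
      exact intervalIntegral.integral_congr (fun σ _ => hK σ)
    have e3 : (∫ σ in (0:ℝ)..L, wedge (γ σ) (deriv γ σ))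
        = ∫ σ in (0:ℝ)..L, wedge (γ σ) (T σ) :=
      intervalIntegral.integral_congr (fun σ _ => by rw [hγ' σ])
    simp only [signedArea, e1, hib, e2, e3]
    ring
  have hKpos : 0 < K :=
    intervalIntegral.intervalIntegral_pos_of_pos (hκc.intervalIntegrable 0 L) hκpos hL
  -- Cauchy–Schwarz : L² ≤ K * J
  have hCS : L ^ 2 ≤ K * J := by
    have hpt : ∀ σ ∈ Set.Icc (0:ℝ) L, 2 * L / K - (L / K) ^ 2 * κ σ ≤ f σ := by
      intro σ _
      have h1 := hκpos σ
      have hid : f σ - (2 * L / K - (L / K) ^ 2 * κ σ)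
          = (κ σ * L - K) ^ 2 / (κ σ * K ^ 2) := by
        rw [hf]
        field_simp
        ring
      have h2 : 0 ≤ (κ σ * L - K) ^ 2 / (κ σ * K ^ 2) := by positivity
      linarith [hid ▸ h2]
    have hmono : (∫ σ in (0:ℝ)..L, (2 * L / K - (L / K) ^ 2 * κ σ)) ≤ J :=
      intervalIntegral.integral_mono_on hL.le
        ((continuous_const.sub (continuous_const.mul hκc)).intervalIntegrable 0 L)
        (hfc.intervalIntegrable 0 L) hpt
    have hev : (∫ σ in (0:ℝ)..L, (2 * L / K - (L / K) ^ 2 * κ σ))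
        = 2 * L / K * L - (L / K) ^ 2 * K := by
      rw [intervalIntegral.integral_sub (g := fun σ => (L / K) ^ 2 * κ σ) (intervalIntegrable_const)
        ((continuous_const.mul hκc).intervalIntegrable 0 L),
        intervalIntegral.integral_const, intervalIntegral.integral_const_mul]
      simp [smul_eq_mul, mul_comm, hKdef]
    have hJge : L ^ 2 / K ≤ J := by
      have : 2 * L / K * L - (L / K) ^ 2 * K = L ^ 2 / K := by
        field_simp
        ring
      linarith [this ▸ (hev ▸ hmono)]
    calc L ^ 2 = K * (L ^ 2 / K) := by field_simp
      _ ≤ K * J := mul_le_mul_of_nonneg_left hJge hKpos.le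
  -- conclude
  have h2AJ : 2 * signedArea L γ ≤ J := by
    have h := le_trans hiso hCS
    have h' : 2 * signedArea L γ * K ≤ J * K := by linarith [mul_comm K J]
    exact le_of_mul_le_mul_right h' hKpos
  constructor
  · rw [hArea]; linarith
  · have habs : |signedArea L e| = (1/2) * J - signedArea L γ := by
      rw [hArea, abs_of_nonpos (by linarith)]; ring
    rw [habs]
    have hr : 2 * K * ((1/2) * J - signedArea L γ)
        = K * J - 2 * signedArea L γ * K := by ring
    linarith [hCS, hr]
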